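/- arXiv:2202.08277 — 6 statements merged into one kernel-verified Lean document; each statement's English description precedes it below -/
import Mathlib

section
/- Let $m$ be a positive integer. The map $n \mapsto a(n)$, sending an exact divisor $n$ of $m$ to the unique residue $a(n)$ modulo $2m$ satisfying $a(n) \equiv -1 \pmod{2n}$ and $a(n) \equiv 1 \pmod{2m/n}$, is a group isomorphism from $(\mathrm{Ex}_m, *)$ onto $O_m = \{a \bmod 2m : a^2 \equiv 1 \pmod{4m}\}$. -/
/-!
Write `a(n)` for an integer with `a(n) ≡ -1 [ZMOD 2n]` and `a(n) ≡ 1 [ZMOD 2(m/n)]`. For coprime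
`a, b` we have `lcm(2a, 2b) = 2ab`, so these two congruences pin down `a(n)` modulo `2m`, and
`a(n)² - 1 = (a(n) + 1)(a(n) - 1)` is divisible by `4m`. Conversely, if `x² ≡ 1 [ZMOD 4m]` then
`x = 2u + 1` with `m ∣ u(u + 1)`; as `u` and `u + 1` are coprime, `m = gcd(m, u+1) · gcd(m, u)`
and `n = gcd(m, u + 1)` is an exact divisor with `x ≡ a(n)`. If `a(n) ≡ a(n')`, then `a(n)` is
`-1` modulo `2n` and `1` modulo `2(m/n')`, forcing `gcd(n, m/n') = 1` and hence `n ∣ n'`.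
For products, `m` splits into the pairwise coprime factors `gcd(n, n')`, `gcd(n, m/n')`,
`gcd(m/n, n')`, `gcd(m/n, m/n')`, and on each of them the sign of `a(n)a(n')` is the product of
the signs of `a(n)` and `a(n')`.
-/

/-- With Bézout `n A + (m/n) B = 1`, the integer `2nA - 1` equals `1 - 2(m/n)B`. -/
def crtSign (m n : ℕ) : ℤ := 2 * n * Nat.gcdA n (m / n) - 1

theorem crtSign_modEq_neg_one (m n : ℕ) : crtSign m n ≡ -1 [ZMOD 2 * n] :=
  Int.modEq_iff_dvd.2 ⟨-Nat.gcdA n (m / n), by unfold crtSign; ring⟩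

theorem crtSign_modEq_one {m n : ℕ} (hc : n.Coprime (m / n)) :
    crtSign m n ≡ 1 [ZMOD 2 * (m / n : ℕ)] := by
  have hbezout : (1 : ℤ) = n * Nat.gcdA n (m / n) + (m / n : ℕ) * Nat.gcdB n (m / n) := by
    exact_mod_cast hc ▸ Nat.gcd_eq_gcd_ab n (m / n)
  exact Int.modEq_iff_dvd.2 ⟨Nat.gcdB n (m / n), by unfold crtSign; linear_combination 2 * hbezout⟩

theorem Int.ModEq.two_mul_of_dvd {d k : ℕ} {x y : ℤ} (h : d ∣ k)
    (hxy : x ≡ y [ZMOD 2 * k]) : x ≡ y [ZMOD 2 * d] :=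
  hxy.of_dvd (mul_dvd_mul_left 2 (Int.natCast_dvd_natCast.2 h))

theorem Int.ModEq.two_mul_mul_of_coprime {a b : ℕ} {x y : ℤ} (hab : a.Coprime b)
    (ha : x ≡ y [ZMOD 2 * a]) (hb : x ≡ y [ZMOD 2 * b]) : x ≡ y [ZMOD 2 * (a * b : ℕ)] := by
  have hlcm : (2 * a).lcm (2 * b) ∣ (y - x).natAbs :=
    Nat.lcm_dvd (Int.natCast_dvd.1 (by exact_mod_cast ha.dvd))
      (Int.natCast_dvd.1 (by exact_mod_cast hb.dvd))
  rw [Nat.lcm_mul_left, hab.lcm_eq_mul, ← Int.natCast_dvd] at hlcm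
  exact Int.modEq_iff_dvd.2 (by exact_mod_cast hlcm)

theorem ZMod.intCast_eq_intCast_iff_modEq_two_mul {d : ℕ} {x y : ℤ} :
    (x : ZMod (2 * d)) = y ↔ x ≡ y [ZMOD 2 * d] := by
  rw [ZMod.intCast_eq_intCast_iff, Nat.cast_mul, Nat.cast_ofNat]

theorem intCast_eq_crtSign_iff {m n : ℕ} (hn : n ∣ m) (hc : n.Coprime (m / n)) {x : ℤ} :
    (x : ZMod (2 * m)) = crtSign m n ↔ x ≡ -1 [ZMOD 2 * n] ∧ x ≡ 1 [ZMOD 2 * (m / n : ℕ)] := by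
  rw [ZMod.intCast_eq_intCast_iff_modEq_two_mul]
  constructor
  · intro h
    exact ⟨(h.two_mul_of_dvd hn).trans (crtSign_modEq_neg_one m n),
      (h.two_mul_of_dvd (Nat.div_dvd_of_dvd hn)).trans (crtSign_modEq_one hc)⟩
  · rintro ⟨h₁, h₂⟩
    have h := Int.ModEq.two_mul_mul_of_coprime hc (h₁.trans (crtSign_modEq_neg_one m n).symm)
      (h₂.trans (crtSign_modEq_one hc).symm)
    rwa [Nat.mul_div_cancel' hn] at h

theorem Nat.Coprime.of_modEq_neg_one_of_modEq_one {a b : ℕ} {x : ℤ}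
    (ha : x ≡ -1 [ZMOD 2 * a]) (hb : x ≡ 1 [ZMOD 2 * b]) : a.Coprime b := by
  have h : (-1 : ℤ) ≡ 1 [ZMOD 2 * (a.gcd b)] :=
    (ha.two_mul_of_dvd (a.gcd_dvd_left b)).symm.trans
      (hb.two_mul_of_dvd (a.gcd_dvd_right b))
  have h2 : (2 * a.gcd b : ℤ) ∣ 2 * 1 := by simpa using h.dvd
  exact Nat.dvd_one.1 (by exact_mod_cast (mul_dvd_mul_iff_left two_ne_zero).1 h2)

theorem dvd_of_modEq_neg_one_of_modEq_one {m n n' : ℕ} (hn'm : n' ∣ m) (hnm : n ∣ m) {x : ℤ}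
    (h₁ : x ≡ -1 [ZMOD 2 * n]) (h₂ : x ≡ 1 [ZMOD 2 * (m / n' : ℕ)]) : n ∣ n' :=
  (Nat.Coprime.of_modEq_neg_one_of_modEq_one h₁ h₂).dvd_of_dvd_mul_right
    (by rwa [Nat.mul_div_cancel' hn'm])

theorem sq_modEq_one_of_modEq_neg_one_of_modEq_one {a b : ℕ} {x : ℤ}
    (ha : x ≡ -1 [ZMOD 2 * a]) (hb : x ≡ 1 [ZMOD 2 * b]) : x ^ 2 ≡ 1 [ZMOD 4 * (a * b : ℕ)] := by
  have h : (2 * a * (2 * b) : ℤ) ∣ x ^ 2 - 1 := by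
    rw [show x ^ 2 - 1 = (-1 - x) * (1 - x) by ring]
    exact mul_dvd_mul ha.dvd hb.dvd
  refine (Int.modEq_iff_dvd.2 ?_).symm
  convert h using 1
  push_cast
  ring

theorem sq_modEq_one_of_intCast_eq_crtSign {m n : ℕ} (hn : n ∣ m) (hc : n.Coprime (m / n))
    {x : ℤ} (hx : (x : ZMod (2 * m)) = crtSign m n) : x ^ 2 ≡ 1 [ZMOD 4 * m] := by
  obtain ⟨h₁, h₂⟩ := (intCast_eq_crtSign_iff hn hc).1 hx
  have h := sq_modEq_one_of_modEq_neg_one_of_modEq_one h₁ h₂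
  rwa [Nat.mul_div_cancel' hn] at h

theorem exists_exact_dvd_of_sq_modEq_one {m : ℕ} (hm : 0 < m) {x : ℤ}
    (h : x ^ 2 ≡ 1 [ZMOD 4 * m]) :
    ∃ n, n ∣ m ∧ n.Coprime (m / n) ∧ x ≡ -1 [ZMOD 2 * n] ∧ x ≡ 1 [ZMOD 2 * (m / n : ℕ)] := by
  obtain ⟨u, rfl⟩ : Odd x := by
    have h2 : (2 : ℤ) ∣ 1 - x ^ 2 :=
      (Dvd.intro (2 * (m : ℤ)) (by ring) : (2 : ℤ) ∣ 4 * m).trans h.dvd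
    simpa [← even_iff_two_dvd, Int.even_sub, parity_simps] using h2
  have hdvd : m ∣ (u + 1).natAbs * u.natAbs := by
    have h4 : (4 * m : ℤ) ∣ 4 * ((u + 1) * u) := by
      rw [← dvd_neg, show -(4 * ((u + 1) * u)) = 1 - (2 * u + 1) ^ 2 by ring]
      exact h.dvd
    rw [← Int.natAbs_mul, ← Int.natCast_dvd]
    exact (mul_dvd_mul_iff_left four_ne_zero).1 h4
  have hcop : (u + 1).natAbs.Coprime u.natAbs :=
    Int.isCoprime_iff_gcd_eq_one.1 ⟨1, -1, by ring⟩
  have hmul := (Nat.gcd_mul_gcd_eq_iff_dvd_mul_of_coprime hcop).2 hdvd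
  set n := m.gcd (u + 1).natAbs
  have hmn : m / n = m.gcd u.natAbs :=
    Nat.div_eq_of_eq_mul_right (Nat.pos_of_mul_pos_right (hmul ▸ hm : 0 < _)) hmul.symm
  refine ⟨n, Dvd.intro _ hmul, hmn ▸ hcop.of_dvd (m.gcd_dvd_right _) (m.gcd_dvd_right _), ?_, ?_⟩
  · refine Int.modEq_iff_dvd.2 ?_
    rw [show -1 - (2 * u + 1) = 2 * -(u + 1) by ring]
    exact mul_dvd_mul_left 2 (dvd_neg.2 (Int.natCast_dvd.2 (m.gcd_dvd_right _)))
  · refine Int.modEq_iff_dvd.2 ?_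
    rw [hmn, show 1 - (2 * u + 1) = 2 * -u by ring]
    exact mul_dvd_mul_left 2 (dvd_neg.2 (Int.natCast_dvd.2 (m.gcd_dvd_right _)))

theorem mul_modEq_of_exact_dvd {m n n' s : ℕ} (hn : 0 < n) (hn' : 0 < n') (hnm : n ∣ m)
    (hn'm : n' ∣ m) (hc : n.Coprime (m / n)) (hc' : n'.Coprime (m / n'))
    (hs : s = n * n' / n.gcd n' ^ 2) {x y : ℤ}
    (hx₁ : x ≡ -1 [ZMOD 2 * n]) (hx₂ : x ≡ 1 [ZMOD 2 * (m / n : ℕ)])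
    (hy₁ : y ≡ -1 [ZMOD 2 * n']) (hy₂ : y ≡ 1 [ZMOD 2 * (m / n' : ℕ)]) :
    x * y ≡ -1 [ZMOD 2 * s] ∧ x * y ≡ 1 [ZMOD 2 * (m / s : ℕ)] := by
  have hn_eq : n.gcd n' * n.gcd (m / n') = n :=
    (Nat.gcd_mul_gcd_eq_iff_dvd_mul_of_coprime hc').2 (by rwa [Nat.mul_div_cancel' hn'm])
  have hn'_eq : n.gcd n' * (m / n).gcd n' = n' := by
    rw [Nat.gcd_comm n n', Nat.gcd_comm (m / n) n']
    exact (Nat.gcd_mul_gcd_eq_iff_dvd_mul_of_coprime hc).2 (by rwa [Nat.mul_div_cancel' hnm])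
  have hmn_eq : (m / n).gcd n' * (m / n).gcd (m / n') = m / n :=
    (Nat.gcd_mul_gcd_eq_iff_dvd_mul_of_coprime hc').2
      (by rw [Nat.mul_div_cancel' hn'm]; exact Nat.div_dvd_of_dvd hnm)
  set g := n.gcd n'
  set n₁ := n.gcd (m / n')
  set n₂ := (m / n).gcd n'
  set r := (m / n).gcd (m / n')
  have hg : 0 < g := Nat.gcd_pos_of_pos_left _ hn
  have hn₁₂ : 0 < n₁ * n₂ :=
    Nat.mul_pos (Nat.pos_of_mul_pos_left (hn_eq ▸ hn)) (Nat.pos_of_mul_pos_left (hn'_eq ▸ hn'))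
  have hs' : s = n₁ * n₂ := by
    rw [hs, ← hn_eq, ← hn'_eq]
    exact Nat.div_eq_of_eq_mul_left (pow_pos hg 2) (by ring)
  have hms : m / s = g * r := by
    rw [hs']
    refine Nat.div_eq_of_eq_mul_left hn₁₂ ?_
    rw [← Nat.mul_div_cancel' hnm, ← hmn_eq, ← hn_eq]
    ring
  constructor
  · rw [hs']
    refine Int.ModEq.two_mul_mul_of_coprime
      (hc'.symm.of_dvd (Nat.gcd_dvd_right _ _) (Nat.gcd_dvd_right _ _)) ?_ ?_
    · simpa using (hx₁.two_mul_of_dvd (Nat.gcd_dvd_left _ _)).mul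
        (hy₂.two_mul_of_dvd (Nat.gcd_dvd_right _ _))
    · simpa using (hx₂.two_mul_of_dvd (Nat.gcd_dvd_left _ _)).mul
        (hy₁.two_mul_of_dvd (Nat.gcd_dvd_right _ _))
  · rw [hms]
    refine Int.ModEq.two_mul_mul_of_coprime
      (hc.of_dvd (Nat.gcd_dvd_left _ _) (Nat.gcd_dvd_left _ _)) ?_ ?_
    · simpa using (hx₁.two_mul_of_dvd (Nat.gcd_dvd_left _ _)).mul
        (hy₁.two_mul_of_dvd (Nat.gcd_dvd_right _ _))
    · simpa using (hx₂.two_mul_of_dvd (Nat.gcd_dvd_left _ _)).mul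
        (hy₂.two_mul_of_dvd (Nat.gcd_dvd_right _ _))

/-- The map `n ↦ a(n)` is a group isomorphism from the group of exact divisors of `m`
(under `n * n' = n n' / gcd(n,n')²`) onto `O_m = {a mod 2m : a² ≡ 1 mod 4m}`. -/
theorem exact_divisors_iso_Om (m : ℕ) (hm : 0 < m) :
    ∃ f : {n : ℕ // 0 < n ∧ n ∣ m ∧ Nat.gcd n (m / n) = 1} →
          {a : ZMod (2 * m) // ∀ x : ℤ, (x : ZMod (2 * m)) = a →
            Int.ModEq (4 * (m : ℤ)) (x ^ 2) 1},
      Function.Bijective f ∧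
      (∀ n : {n : ℕ // 0 < n ∧ n ∣ m ∧ Nat.gcd n (m / n) = 1},
        ZMod.castHom (mul_dvd_mul_left 2 n.2.2.1) (ZMod (2 * n.1)) (f n).1 = -1 ∧
        ZMod.castHom (mul_dvd_mul_left 2 (Nat.div_dvd_of_dvd n.2.2.1))
          (ZMod (2 * (m / n.1))) (f n).1 = 1) ∧
      (∀ n n' s : {n : ℕ // 0 < n ∧ n ∣ m ∧ Nat.gcd n (m / n) = 1},
        s.1 = n.1 * n'.1 / Nat.gcd n.1 n'.1 ^ 2 → (f s).1 = (f n).1 * (f n').1) := by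
  refine ⟨fun n => ⟨crtSign m n, fun _ => sq_modEq_one_of_intCast_eq_crtSign n.2.2.1 n.2.2.2⟩,
    ⟨?_, ?_⟩, fun n => ⟨?_, ?_⟩, ?_⟩
  · rintro ⟨n, _, hnm, hc⟩ ⟨n', _, hn'm, hc'⟩ h
    have hval := congrArg Subtype.val h
    exact Subtype.ext (Nat.dvd_antisymm
      (dvd_of_modEq_neg_one_of_modEq_one hn'm hnm (crtSign_modEq_neg_one m n)
        ((intCast_eq_crtSign_iff hn'm hc').1 hval).2)
      (dvd_of_modEq_neg_one_of_modEq_one hnm hn'm (crtSign_modEq_neg_one m n')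
        ((intCast_eq_crtSign_iff hnm hc).1 hval.symm).2))
  · rintro ⟨a, ha⟩
    have : NeZero (2 * m) := ⟨by omega⟩
    have hx : ((a.val : ℤ) : ZMod (2 * m)) = a := by simp
    obtain ⟨n, hnm, hc, h₁, h₂⟩ := exists_exact_dvd_of_sq_modEq_one hm (ha _ hx)
    refine ⟨⟨n, Nat.pos_of_dvd_of_pos hnm hm, hnm, hc⟩, Subtype.ext ?_⟩
    exact ((intCast_eq_crtSign_iff hnm hc).2 ⟨h₁, h₂⟩).symm.trans hx
  · simpa using ZMod.intCast_eq_intCast_iff_modEq_two_mul.2 (crtSign_modEq_neg_one m n)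
  · simpa using ZMod.intCast_eq_intCast_iff_modEq_two_mul.2 (crtSign_modEq_one n.2.2.2)
  · rintro ⟨n, hn, hnm, hc⟩ ⟨n', hn', hn'm, hc'⟩ ⟨s, _, hsm, hcs⟩ hs
    obtain ⟨h₁, h₂⟩ := mul_modEq_of_exact_dvd hn hn' hnm hn'm hc hc' hs
      (crtSign_modEq_neg_one m n) (crtSign_modEq_one hc)
      (crtSign_modEq_neg_one m n') (crtSign_modEq_one hc')
    simpa using ((intCast_eq_crtSign_iff hsm hcs).2 ⟨h₁, h₂⟩).symm
end

section
/- Let $N$ be a positive integer and $h$ a positive divisor of $N$ with $h^2 \mid Nh$. For each exact divisor $E$ of $Nh$, let $h_E$ be the largest divisor of $h$ such that $h_E^2 \mid E$. Then $E/h_E^2$ is an exact divisor of $N/h$, and the map $E \mapsto E/h_E^2$ is a surjective group homomorphism from $\mathrm{Ex}_{Nh}$ to $\mathrm{Ex}_{N/h}$. -/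
private lemma fact_ext' {a b : ℕ} (ha : a ≠ 0) (hb : b ≠ 0)
    (h : ∀ p, p.Prime → a.factorization p = b.factorization p) : a = b := by
  apply Nat.eq_of_factorization_eq ha hb
  intro p
  by_cases hp : p.Prime
  · exact h p hp
  · rw [Nat.factorization_eq_zero_of_not_prime _ hp, Nat.factorization_eq_zero_of_not_prime _ hp]

private lemma fact_dvd' {a b : ℕ} (ha : a ≠ 0) (hb : b ≠ 0)
    (h : ∀ p, p.Prime → a.factorization p ≤ b.factorization p) : a ∣ b := by
  rw [← Nat.factorization_le_iff_dvd ha hb]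
  intro p
  by_cases hp : p.Prime
  · exact h p hp
  · rw [Nat.factorization_eq_zero_of_not_prime _ hp]
    exact Nat.zero_le _

private lemma exact_iff' {M E : ℕ} (hM : M ≠ 0) (hEM : E ∣ M) :
    Nat.gcd E (M / E) = 1 ↔
      ∀ p, p.Prime → E.factorization p = 0 ∨ E.factorization p = M.factorization p := by
  have hE0 : E ≠ 0 := fun hE => hM (by simpa [hE] using hEM)
  have hME : M / E ≠ 0 := (Nat.div_pos (Nat.le_of_dvd (Nat.pos_of_ne_zero hM) hEM)
    (Nat.pos_of_ne_zero hE0)).ne'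
  have hle : ∀ p : ℕ, E.factorization p ≤ M.factorization p := by
    intro p
    exact (Nat.factorization_le_iff_dvd hE0 hM).mpr hEM p
  constructor
  · intro hg p hp
    have h1 : (Nat.gcd E (M / E)).factorization p = 0 := by
      rw [hg]; simp
    rw [Nat.factorization_gcd hE0 hME, Finsupp.inf_apply, Nat.factorization_div hEM,
      Finsupp.tsub_apply] at h1
    have := hle p
    omega
  · intro hg
    apply fact_ext' (Nat.gcd_ne_zero_left hE0) one_ne_zero
    intro p hp
    rw [Nat.factorization_gcd hE0 hME, Finsupp.inf_apply, Nat.factorization_div hEM,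
      Finsupp.tsub_apply, Nat.factorization_one]
    have h1 := hg p hp
    have := hle p
    simp only [Finsupp.coe_zero, Pi.zero_apply]
    omega

/-- For `h ∣ N`, the map `E ↦ E / h_E²` (where `h_E` is the largest divisor of `h`
with `h_E² ∣ E`) is a surjective group homomorphism from the group of exact divisors
of `Nh` to the group of exact divisors of `N/h`. -/
theorem exact_divisor_proj_surj_hom (N h : ℕ) (hN : 0 < N) (hh : 0 < h) (hdvd : h ∣ N) :
    ∃ f : {E : ℕ // 0 < E ∧ E ∣ N * h ∧ Nat.gcd E (N * h / E) = 1} →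
          {n : ℕ // 0 < n ∧ n ∣ N / h ∧ Nat.gcd n (N / h / n) = 1},
      (∀ E, ∃ hE : ℕ, hE ∣ h ∧ hE ^ 2 ∣ E.1 ∧
          (∀ k : ℕ, k ∣ h → k ^ 2 ∣ E.1 → k ≤ hE) ∧ (f E).1 = E.1 / hE ^ 2) ∧
      Function.Surjective f ∧
      (∀ E E' s, s.1 = E.1 * E'.1 / Nat.gcd E.1 E'.1 ^ 2 →
        (f s).1 = (f E).1 * (f E').1 / Nat.gcd (f E).1 (f E').1 ^ 2) := by
  have hQpos : 0 < N / h := Nat.div_pos (Nat.le_of_dvd hN hdvd) hh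
  have hMpos : 0 < N * h := Nat.mul_pos hN hh
  have hMfac : ∀ p : ℕ, (N * h).factorization p
      = (N / h).factorization p + 2 * h.factorization p := by
    intro p
    have h1 : N * h = N / h * h * h := by rw [Nat.div_mul_cancel hdvd]
    rw [h1, Nat.factorization_mul (Nat.mul_pos hQpos hh).ne' hh.ne',
      Nat.factorization_mul hQpos.ne' hh.ne', Finsupp.add_apply, Finsupp.add_apply]
    ring
  have hsrc : ∀ E : {E : ℕ // 0 < E ∧ E ∣ N * h ∧ Nat.gcd E (N * h / E) = 1},
      ∀ p : ℕ, p.Prime → E.1.factorization p = 0 ∨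
        E.1.factorization p = (N / h).factorization p + 2 * h.factorization p := by
    intro E p hp
    have h1 := (exact_iff' hMpos.ne' E.2.2.1).mp E.2.2.2 p hp
    rw [hMfac p] at h1
    exact h1
  have hmem : ∀ E : {E : ℕ // 0 < E ∧ E ∣ N * h ∧ Nat.gcd E (N * h / E) = 1},
      0 < Nat.gcd E.1 (N / h) ∧ Nat.gcd E.1 (N / h) ∣ N / h ∧
        Nat.gcd (Nat.gcd E.1 (N / h)) (N / h / Nat.gcd E.1 (N / h)) = 1 := by
    intro E
    obtain ⟨hE0, hEM, _⟩ := E.2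
    refine ⟨Nat.pos_of_ne_zero (Nat.gcd_ne_zero_right hQpos.ne'),
      Nat.gcd_dvd_right _ _, ?_⟩
    rw [exact_iff' hQpos.ne' (Nat.gcd_dvd_right _ _)]
    intro p hp
    rw [Nat.factorization_gcd hE0.ne' hQpos.ne', Finsupp.inf_apply]
    rcases hsrc E p hp with h1 | h1 <;> omega
  refine ⟨fun E => ⟨Nat.gcd E.1 (N / h), hmem E⟩, ?_, ?_, ?_⟩
  · -- existence of hE
    intro E
    obtain ⟨hE0, hEM, hEx⟩ := E.2
    refine ⟨Nat.gcd h (E.1 ^ h), Nat.gcd_dvd_left _ _, ?_, ?_, ?_⟩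
    · apply fact_dvd' (pow_ne_zero 2 (Nat.gcd_ne_zero_left hh.ne')) hE0.ne'
      intro p hp
      rw [Nat.factorization_pow, Finsupp.smul_apply, smul_eq_mul,
        Nat.factorization_gcd hh.ne' (pow_ne_zero h hE0.ne'), Finsupp.inf_apply,
        Nat.factorization_pow, Finsupp.smul_apply, smul_eq_mul]
      rcases hsrc E p hp with h1 | h1
      · rw [h1]; simp
      · have h2 : E.1.factorization p ≤ h * E.1.factorization p :=
          Nat.le_mul_of_pos_left _ hh
        omega
    · intro k hk hk2
      have hk0 : k ≠ 0 := by
        rintro rfl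
        exact absurd (Nat.eq_zero_of_zero_dvd hk) hh.ne'
      apply Nat.le_of_dvd (Nat.pos_of_ne_zero (Nat.gcd_ne_zero_left hh.ne'))
      apply Nat.dvd_gcd hk
      apply fact_dvd' hk0 (pow_ne_zero h hE0.ne')
      intro p hp
      rw [Nat.factorization_pow, Finsupp.smul_apply, smul_eq_mul]
      have h2 : (k ^ 2).factorization p ≤ E.1.factorization p :=
        (Nat.factorization_le_iff_dvd (pow_ne_zero 2 hk0) hE0.ne').mpr hk2 p
      rw [Nat.factorization_pow, Finsupp.smul_apply, smul_eq_mul] at h2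
      have h3 : E.1.factorization p ≤ h * E.1.factorization p :=
        Nat.le_mul_of_pos_left _ hh
      omega
    · show Nat.gcd E.1 (N / h) = E.1 / Nat.gcd h (E.1 ^ h) ^ 2
      symm
      apply Nat.div_eq_of_eq_mul_left
        (pow_pos (Nat.pos_of_ne_zero (Nat.gcd_ne_zero_left hh.ne')) 2)
      apply fact_ext' hE0.ne' (Nat.mul_ne_zero (Nat.gcd_ne_zero_right hQpos.ne') (pow_ne_zero 2 (Nat.gcd_ne_zero_left hh.ne')))
      intro p hp
      rw [Nat.factorization_mul (Nat.gcd_ne_zero_right hQpos.ne')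
          (pow_ne_zero 2 (Nat.gcd_ne_zero_left hh.ne')), Finsupp.add_apply,
        Nat.factorization_gcd hE0.ne' hQpos.ne', Finsupp.inf_apply,
        Nat.factorization_pow, Finsupp.smul_apply, smul_eq_mul,
        Nat.factorization_gcd hh.ne' (pow_ne_zero h hE0.ne'), Finsupp.inf_apply,
        Nat.factorization_pow, Finsupp.smul_apply, smul_eq_mul]
      rcases hsrc E p hp with h1 | h1
      · rw [h1]; simp
      · have h2 : E.1.factorization p ≤ h * E.1.factorization p :=
          Nat.le_mul_of_pos_left _ hh
        omega
  · -- surjectivity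
    rintro ⟨n, hn0, hnQ, hnx⟩
    have hnx' := (exact_iff' hQpos.ne' hnQ).mp hnx
    have hE0 : Nat.gcd (N * h) (n ^ (N * h)) ≠ 0 := Nat.gcd_ne_zero_left hMpos.ne'
    have hEM : Nat.gcd (N * h) (n ^ (N * h)) ∣ N * h := Nat.gcd_dvd_left _ _
    have hvE : ∀ p : ℕ, (Nat.gcd (N * h) (n ^ (N * h))).factorization p
        = min ((N * h).factorization p) (N * h * n.factorization p) := by
      intro p
      rw [Nat.factorization_gcd hMpos.ne' (pow_ne_zero _ hn0.ne'), Finsupp.inf_apply,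
        Nat.factorization_pow, Finsupp.smul_apply, smul_eq_mul]
    have hMlt : ∀ p : ℕ, (N * h).factorization p < N * h :=
      fun p => Nat.factorization_lt p hMpos.ne'
    have hEx : ∀ p : ℕ, p.Prime →
        (Nat.gcd (N * h) (n ^ (N * h))).factorization p = 0 ∨
        (Nat.gcd (N * h) (n ^ (N * h))).factorization p = (N * h).factorization p := by
      intro p hp
      rw [hvE p]
      rcases hnx' p hp with h1 | h1
      · rw [h1]; simp
      · by_cases hq : n.factorization p = 0
        · rw [hq]; simp
        · have h2 : N * h ≤ N * h * n.factorization p :=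
            Nat.le_mul_of_pos_right _ (Nat.pos_of_ne_zero hq)
          have := hMlt p
          omega
    refine ⟨⟨Nat.gcd (N * h) (n ^ (N * h)), Nat.pos_of_ne_zero hE0, hEM,
      (exact_iff' hMpos.ne' hEM).mpr hEx⟩, ?_⟩
    apply Subtype.ext
    show Nat.gcd (Nat.gcd (N * h) (n ^ (N * h))) (N / h) = n
    apply fact_ext' (Nat.gcd_ne_zero_right hQpos.ne') hn0.ne'
    intro p hp
    rw [Nat.factorization_gcd hE0 hQpos.ne', Finsupp.inf_apply, hvE p, hMfac p]
    have hnle : n.factorization p ≤ (N / h).factorization p :=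
      (Nat.factorization_le_iff_dvd hn0.ne' hQpos.ne').mpr hnQ p
    rcases hnx' p hp with h1 | h1
    · rw [h1]; simp
    · by_cases hq : n.factorization p = 0
      · rw [hq]; simp [hq ▸ h1.symm]
      · have h2 : N * h ≤ N * h * n.factorization p :=
          Nat.le_mul_of_pos_right _ (Nat.pos_of_ne_zero hq)
        have h4 := hMlt p
        rw [hMfac p] at h4
        omega
  · -- homomorphism
    rintro E E' s hs
    have hE0 := E.2.1
    have hE'0 := E'.2.1
    have hs0 := s.2.1
    have hdd : Nat.gcd E.1 E'.1 ^ 2 ∣ E.1 * E'.1 := by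
      apply fact_dvd' (pow_ne_zero 2 (Nat.gcd_ne_zero_left hE0.ne'))
        (Nat.mul_ne_zero hE0.ne' hE'0.ne')
      intro p hp
      rw [Nat.factorization_pow, Finsupp.smul_apply, smul_eq_mul,
        Nat.factorization_gcd hE0.ne' hE'0.ne', Finsupp.inf_apply,
        Nat.factorization_mul hE0.ne' hE'0.ne', Finsupp.add_apply]
      omega
    have hvs : ∀ p : ℕ, s.1.factorization p
        = E.1.factorization p + E'.1.factorization p
          - 2 * min (E.1.factorization p) (E'.1.factorization p) := by
      intro p
      rw [hs, Nat.factorization_div hdd, Finsupp.tsub_apply,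
        Nat.factorization_mul hE0.ne' hE'0.ne', Finsupp.add_apply,
        Nat.factorization_pow, Finsupp.smul_apply, smul_eq_mul,
        Nat.factorization_gcd hE0.ne' hE'0.ne', Finsupp.inf_apply]
    show Nat.gcd s.1 (N / h) =
      Nat.gcd E.1 (N / h) * Nat.gcd E'.1 (N / h)
        / Nat.gcd (Nat.gcd E.1 (N / h)) (Nat.gcd E'.1 (N / h)) ^ 2
    have ha0 : Nat.gcd E.1 (N / h) ≠ 0 := Nat.gcd_ne_zero_right hQpos.ne'
    have hb0 : Nat.gcd E'.1 (N / h) ≠ 0 := Nat.gcd_ne_zero_right hQpos.ne'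
    have hg0 : Nat.gcd (Nat.gcd E.1 (N / h)) (Nat.gcd E'.1 (N / h)) ≠ 0 :=
      Nat.gcd_ne_zero_left ha0
    symm
    apply Nat.div_eq_of_eq_mul_left (pow_pos (Nat.pos_of_ne_zero hg0) 2)
    apply fact_ext' (Nat.mul_ne_zero ha0 hb0)
      (Nat.mul_ne_zero (Nat.gcd_ne_zero_right hQpos.ne') (pow_ne_zero 2 hg0))
    intro p hp
    rw [Nat.factorization_mul ha0 hb0, Finsupp.add_apply,
      Nat.factorization_mul (Nat.gcd_ne_zero_right hQpos.ne') (pow_ne_zero 2 hg0),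
      Finsupp.add_apply]
    rw [Nat.factorization_pow, Finsupp.smul_apply, smul_eq_mul,
      Nat.factorization_gcd ha0 hb0, Finsupp.inf_apply]
    rw [Nat.factorization_gcd hE0.ne' hQpos.ne', Finsupp.inf_apply,
      Nat.factorization_gcd hE'0.ne' hQpos.ne', Finsupp.inf_apply,
      Nat.factorization_gcd hs0.ne' hQpos.ne', Finsupp.inf_apply]
    have h1 := hvs p
    rcases hsrc E p hp with h2 | h2 <;> rcases hsrc E' p hp with h3 | h3 <;> omega
end

section
/- Let $N$ be a positive integer and $n$ an exact divisor of $N$. Define $W_n$ to be the set of real matrices $\frac{1}{\sqrt{n}}\begin{pmatrix} an & b \\ cN & dn \end{pmatrix}$ with $a, b, c, d \in \mathbb{Z}$ and $adn^2 - bcN = n$. Then for exact divisors $n, n'$ of $N$, the product of any element of $W_n$ with any element of $W_{n'}$ lies in $W_{n*n'}$, where $n * n' = nn'/\gcd(n,n')^2$. -/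
/-!
With `g = gcd n n'`, write `n = g u`, `n' = g v`; since `lcm n n' = g u v` divides `N`, also
`N = g u v k`. The product of the integral matrices `[[a g u, b], [c N, d g u]]` and
`[[a' g v, b'], [c' N, d' g v]]` is `g` times an integral matrix of the same shape for `u v`, whose
determinant is `u v` because determinants multiply; the scalars combine as
`√(g u) √(g v) = g √(u v)`.
-/

/-- The Atkin–Lehner coset `W_n` attached to an exact divisor `n` of `N`. -/
def Wset (N n : ℕ) : Set (Matrix (Fin 2) (Fin 2) ℝ) :=
  {M | ∃ a b c d : ℤ, a * d * (n : ℤ) ^ 2 - b * c * (N : ℤ) = n ∧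
    M = !![(a : ℝ) * n / Real.sqrt n, (b : ℝ) / Real.sqrt n;
           (c : ℝ) * N / Real.sqrt n, (d : ℝ) * n / Real.sqrt n]}

def wMatrix (N n : ℕ) (a b c d : ℤ) : Matrix (Fin 2) (Fin 2) ℤ :=
  !![a * n, b; c * N, d * n]

lemma det_wMatrix (N n : ℕ) (a b c d : ℤ) :
    (wMatrix N n a b c d).det = a * d * (n : ℤ) ^ 2 - b * c * (N : ℤ) := by
  rw [wMatrix, Matrix.det_fin_two_of]; ring

lemma mem_Wset_iff {N n : ℕ} {M : Matrix (Fin 2) (Fin 2) ℝ} :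
    M ∈ Wset N n ↔ ∃ a b c d : ℤ, (wMatrix N n a b c d).det = n ∧
      M = (√n)⁻¹ • (wMatrix N n a b c d).map (↑) := by
  simp only [Wset, det_wMatrix]
  refine exists₄_congr fun a b c d => and_congr_right fun _ => Eq.congr_right ?_
  ext i j
  fin_cases i <;> fin_cases j <;> simp [wMatrix, div_eq_inv_mul]

lemma exists_wMatrix_mul_wMatrix (g u v k : ℕ) (a b c d a' b' c' d' : ℤ) :
    ∃ A B C D : ℤ, wMatrix (g * u * v * k) (g * u) a b c d *
      wMatrix (g * u * v * k) (g * v) a' b' c' d' =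
        (g : ℤ) • wMatrix (g * u * v * k) (u * v) A B C D := by
  refine ⟨a * a' * g + b * c' * k, a * b' * u + b * d' * v, c * a' * v + d * c' * u,
    c * b' * k + d * d' * g, ?_⟩
  simp only [wMatrix, Matrix.mul_fin_two, Matrix.smul_of]
  ext i j
  fin_cases i <;> fin_cases j <;> simp <;> ring

lemma det_eq_of_mul_eq_smul {R : Type*} [CommRing R] [IsDomain R]
    {X Y Z : Matrix (Fin 2) (Fin 2) R} {g u v : R} (hg : g ≠ 0) (hXY : X * Y = g • Z)
    (hX : X.det = g * u) (hY : Y.det = g * v) : Z.det = u * v := by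
  have h := congrArg Matrix.det hXY
  rw [Matrix.det_mul, hX, hY, Matrix.det_smul, Fintype.card_fin] at h
  exact mul_left_cancel₀ (pow_ne_zero 2 hg) (by linear_combination -h)

lemma inv_sqrt_smul_mul_inv_sqrt_smul {g u v : ℕ} (hg : 0 < g)
    {X Y Z : Matrix (Fin 2) (Fin 2) ℤ} (hXY : X * Y = (g : ℤ) • Z) :
    (√(g * u : ℕ))⁻¹ • X.map (↑) * (√(g * v : ℕ))⁻¹ • Y.map (↑) =
      (√(u * v : ℕ))⁻¹ • Z.map ((↑) : ℤ → ℝ) := by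
  have hsqrt : √(g * u : ℕ) * √(g * v : ℕ) = g * √(u * v : ℕ) := by
    push_cast
    rw [← Real.sqrt_mul (by positivity), show (g * u * (g * v) : ℝ) = g ^ 2 * (u * v) by ring,
      Real.sqrt_mul (by positivity), Real.sqrt_sq (Nat.cast_nonneg g)]
  have hmap : X.map (↑) * Y.map (↑) = (g : ℝ) • Z.map ((↑) : ℤ → ℝ) := by
    have h := Matrix.map_mul (L := X) (M := Y) (f := Int.castRingHom ℝ)
    rw [hXY, Matrix.map_smul' _ _ _ (map_mul _)] at h
    exact h.symm
  have hg' : (g : ℝ) ≠ 0 := by positivity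
  rw [smul_mul_smul_comm, hmap, smul_smul, ← mul_inv, hsqrt, mul_inv, mul_comm (g : ℝ)⁻¹,
    inv_mul_cancel_right₀ hg']

lemma exists_eq_gcd_mul {N n n' : ℕ} (hn : 0 < n) (hnd : n ∣ N) (hnd' : n' ∣ N) :
    ∃ g u v k : ℕ, 0 < g ∧ n = g * u ∧ n' = g * v ∧ N = g * u * v * k ∧
      n * n' / Nat.gcd n n' ^ 2 = u * v := by
  have hg := Nat.gcd_pos_of_pos_left n' hn
  have hgl := Nat.gcd_mul_lcm n n'
  obtain ⟨k, hk⟩ := Nat.lcm_dvd hnd hnd'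
  obtain ⟨u, hu⟩ := Nat.gcd_dvd_left n n'
  obtain ⟨v, hv⟩ := Nat.gcd_dvd_right n n'
  generalize Nat.gcd n n' = g at *
  subst hu hv hk
  have hlcm : Nat.lcm (g * u) (g * v) = g * u * v :=
    Nat.eq_of_mul_eq_mul_left hg (by rw [hgl]; ring)
  refine ⟨g, u, v, k, hg, rfl, rfl, by rw [hlcm], ?_⟩
  rw [Nat.div_eq_iff_eq_mul_left (by positivity) ⟨u * v, by ring⟩]
  ring

theorem Wset_mul_mem_general (N n n' : ℕ) (hn : 0 < n) (hnd : n ∣ N) (hnd' : n' ∣ N) :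
    ∀ M ∈ Wset N n, ∀ M' ∈ Wset N n', M * M' ∈ Wset N (n * n' / Nat.gcd n n' ^ 2) := by
  obtain ⟨g, u, v, k, hg, rfl, rfl, rfl, hquot⟩ := exists_eq_gcd_mul hn hnd hnd'
  simp only [hquot, mem_Wset_iff]
  rintro _ ⟨a, b, c, d, hdet, rfl⟩ _ ⟨a', b', c', d', hdet', rfl⟩
  obtain ⟨A, B, C, D, hXY⟩ := exists_wMatrix_mul_wMatrix g u v k a b c d a' b' c' d'
  refine ⟨A, B, C, D, ?_, inv_sqrt_smul_mul_inv_sqrt_smul hg hXY⟩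
  push_cast at hdet hdet' ⊢
  exact det_eq_of_mul_eq_smul (by positivity) hXY hdet hdet'

/-- For exact divisors `n, n'` of `N`, the product of an element of `W_n` and an
element of `W_{n'}` lies in `W_{n*n'}` where `n * n' = n n' / gcd(n,n')²`. -/
theorem Wset_mul_mem (N n n' : ℕ) (hN : 0 < N)
    (hn : 0 < n) (hnd : n ∣ N) (hng : Nat.gcd n (N / n) = 1)
    (hn' : 0 < n') (hnd' : n' ∣ N) (hng' : Nat.gcd n' (N / n') = 1) :
    ∀ M ∈ Wset N n, ∀ M' ∈ Wset N n', M * M' ∈ Wset N (n * n' / Nat.gcd n n' ^ 2) :=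
  Wset_mul_mem_general N n n' hn hnd hnd'
end

section
/- Let $N$ be a positive integer and $n$ an exact divisor of $N$, and let $W_n$ be the set of matrices $\frac{1}{\sqrt{n}}\begin{pmatrix} an & b \\ cN & dn \end{pmatrix}$ with $a,b,c,d \in \mathbb{Z}$ and $adn^2 - bcN = n$. Then $W_n \Gamma_0(N) = \Gamma_0(N) W_n = W_n$; that is, $W_n$ is stable under left and right multiplication by $\Gamma_0(N)$. -/
set_option maxHeartbeats 1000000


open scoped Pointwise

/-- The congruence subgroup `Γ₀(N)`, viewed as a set of real matrices. -/
def Gamma0set (N : ℕ) : Set (Matrix (Fin 2) (Fin 2) ℝ) :=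
  {M | ∃ a b c d : ℤ, a * d - b * c = 1 ∧ (N : ℤ) ∣ c ∧
    M = !![(a : ℝ), (b : ℝ); (c : ℝ), (d : ℝ)]}

/-- `W_n Γ₀(N) = Γ₀(N) W_n = W_n`: the Atkin–Lehner coset `W_n` is stable under
left and right multiplication by `Γ₀(N)`. -/
theorem Wset_mul_Gamma0 (N n : ℕ) (hN : 0 < N) (hn : 0 < n) (hnd : n ∣ N)
    (hng : Nat.gcd n (N / n) = 1) :
    Wset N n * Gamma0set N = Wset N n ∧ Gamma0set N * Wset N n = Wset N n := by
  obtain ⟨m, hm⟩ := hnd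
  subst hm
  have hs : Real.sqrt n ≠ 0 := by positivity
  have hNr : ((n * m : ℕ) : ℝ) = (n : ℝ) * m := by push_cast; ring
  have one_mem : (1 : Matrix (Fin 2) (Fin 2) ℝ) ∈ Gamma0set (n * m) :=
    ⟨1, 0, 0, 1, by ring, dvd_zero _, by rw [Matrix.one_fin_two]; push_cast; rfl⟩
  constructor
  · apply Set.Subset.antisymm
    · rintro x hx
      rw [Set.mem_mul] at hx
      obtain ⟨y, ⟨a, b, c, d, hdet, rfl⟩, z, ⟨a', b', c', d', hdet', ⟨e', rfl⟩, rfl⟩, rfl⟩ := hx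
      refine ⟨a * a' + b * m * e', a * n * b' + b * d', c * a' + d * n * e',
        c * m * b' + d * d', ?_, ?_⟩
      · push_cast at hdet hdet' ⊢
        linear_combination (a' * d' - b' * ((n : ℤ) * m * e')) * hdet + (n : ℤ) * hdet'
      · rw [Matrix.mul_fin_two]
        ext i j
        fin_cases i <;> fin_cases j <;>
          simp only [Matrix.cons_val', Matrix.cons_val_zero, Matrix.cons_val_one,
            Matrix.head_cons, Matrix.head_fin_const, Matrix.empty_val',
            Matrix.cons_val_fin_one] <;>
          push_cast <;> field_simp <;> ring
    · intro x hx
      exact ⟨x, hx, 1, one_mem, mul_one x⟩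
  · apply Set.Subset.antisymm
    · rintro x hx
      rw [Set.mem_mul] at hx
      obtain ⟨z, ⟨a', b', c', d', hdet', ⟨e', rfl⟩, rfl⟩, y, ⟨a, b, c, d, hdet, rfl⟩, rfl⟩ := hx
      refine ⟨a' * a + b' * c * m, a' * b + b' * d * n, a * n * e' + c * d',
        m * e' * b + d * d', ?_, ?_⟩
      · push_cast at hdet hdet' ⊢
        linear_combination (a' * d' - b' * ((n : ℤ) * m * e')) * hdet + (n : ℤ) * hdet'
      · rw [Matrix.mul_fin_two]
        ext i j
        fin_cases i <;> fin_cases j <;>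
          simp only [Matrix.cons_val', Matrix.cons_val_zero, Matrix.cons_val_one,
            Matrix.head_cons, Matrix.head_fin_const, Matrix.empty_val',
            Matrix.cons_val_fin_one] <;>
          push_cast <;> field_simp <;> ring
    · intro x hx
      exact ⟨1, one_mem, x, hx, one_mul x⟩
end

section
/- Let $N$ be a positive integer, $h$ a divisor of $N$, and $v$ an integer. Then the map $\chi_{N,v,h} : \Gamma_0(N) \to \mathbb{C}^\times$ defined by $\chi_{N,v,h}\begin{pmatrix} a & b \\ c & d \end{pmatrix} = e^{-2\pi i \, v c d / (Nh)}$ is a group homomorphism whose kernel contains $\Gamma_0(Nh)$, provided $h \mid 24$ and $h \mid N$. -/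
/-!
Write `γ = [[a, b], [c, d]]`. The lower row of `γ₁ γ₂` is `(c₁a₂ + d₁c₂, c₁b₂ + d₁d₂)`, and by
`a₂d₂ - b₂c₂ = 1`,
`(c₁a₂ + d₁c₂)(c₁b₂ + d₁d₂) - c₁d₁ - c₂d₂ = c₁² a₂b₂ + 2 c₁c₂ b₂d₁ + (d₁² - 1) c₂d₂`.
On `Γ₀(N)` with `h ∣ N` the first two terms are divisible by `Nh`. Since `a₁d₁ ≡ 1 mod h`, `d₁` is a
unit mod `h`, and every unit mod a divisor of `24` squares to `1`; so the last term is divisible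
by `Nh` as well. Hence `γ ↦ cd` is additive modulo `Nh`, and composing it with the character
`x ↦ e^{-2πi v x / (Nh)}` of `ℤ/Nhℤ` gives the homomorphism; its kernel contains `Γ₀(Nh)`
because `Nh ∣ c` there.
-/

open Complex Matrix CongruenceSubgroup Real
open scoped MatrixGroups

theorem ZMod.units_sq_eq_one_of_dvd_24 {h : ℕ} (hh : h ∣ 24) (u : (ZMod h)ˣ) : u ^ 2 = 1 := by
  obtain ⟨w, rfl⟩ := ZMod.unitsMap_surjective hh u
  rw [← map_pow, show w ^ 2 = 1 by revert w; decide, map_one]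

theorem Int.dvd_sq_sub_one_of_dvd_24 {h : ℕ} (hh : h ∣ 24) {a d : ℤ}
    (had : (h : ℤ) ∣ a * d - 1) : (h : ℤ) ∣ d ^ 2 - 1 := by
  have hda : (d : ZMod h) * a = 1 := by
    rw [mul_comm]
    exact_mod_cast ((ZMod.intCast_eq_intCast_iff_dvd_sub 1 (a * d) h).mpr had).symm
  have hsq : (d : ZMod h) ^ 2 = 1 := by
    simpa using congrArg Units.val (ZMod.units_sq_eq_one_of_dvd_24 hh (Units.mkOfMulEqOne _ _ hda))
  exact (ZMod.intCast_eq_intCast_iff_dvd_sub 1 (d ^ 2) h).mp (by exact_mod_cast hsq.symm)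

theorem mul_dvd_lowerRow_mul_sub {N h a₂ b₂ c₁ c₂ d₁ d₂ : ℤ} (hhN : h ∣ N) (hc₁ : N ∣ c₁)
    (hc₂ : N ∣ c₂) (hd₁ : h ∣ d₁ ^ 2 - 1) (det₂ : a₂ * d₂ - b₂ * c₂ = 1) :
    N * h ∣ (c₁ * a₂ + d₁ * c₂) * (c₁ * b₂ + d₁ * d₂) - (c₁ * d₁ + c₂ * d₂) := by
  have hexpand : (c₁ * a₂ + d₁ * c₂) * (c₁ * b₂ + d₁ * d₂) - (c₁ * d₁ + c₂ * d₂) =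
      c₁ * c₁ * (a₂ * b₂) + c₁ * c₂ * (2 * b₂ * d₁) + c₂ * (d₁ ^ 2 - 1) * d₂ := by
    linear_combination (c₁ * d₁) * det₂
  rw [hexpand]
  exact dvd_add (dvd_add ((mul_dvd_mul hc₁ (hhN.trans hc₁)).mul_right _)
    ((mul_dvd_mul hc₁ (hhN.trans hc₂)).mul_right _)) ((mul_dvd_mul hc₂ hd₁).mul_right _)

theorem CongruenceSubgroup.dvd_of_mem_Gamma0 {N : ℕ} {γ : SL(2, ℤ)} (hγ : γ ∈ Gamma0 N) :
    (N : ℤ) ∣ γ 1 0 :=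
  (ZMod.intCast_zmod_eq_zero_iff_dvd _ _).mp (Gamma0_mem.mp hγ)

theorem Matrix.SpecialLinearGroup.det_fin_two_eq_one (γ : SL(2, ℤ)) :
    γ 0 0 * γ 1 1 - γ 0 1 * γ 1 0 = 1 := by
  rw [← Matrix.det_fin_two, SpecialLinearGroup.det_coe]

theorem CongruenceSubgroup.mul_dvd_lowerRow_prod_mul_sub {N h : ℕ} (hh24 : h ∣ 24) (hhN : h ∣ N)
    {γ₁ γ₂ : SL(2, ℤ)} (hγ₁ : γ₁ ∈ Gamma0 N) (hγ₂ : γ₂ ∈ Gamma0 N) :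
    (N * h : ℤ) ∣ (γ₁ * γ₂) 1 0 * (γ₁ * γ₂) 1 1 - (γ₁ 1 0 * γ₁ 1 1 + γ₂ 1 0 * γ₂ 1 1) := by
  have hhN' : (h : ℤ) ∣ N := Int.natCast_dvd_natCast.mpr hhN
  have hd₁ : (h : ℤ) ∣ γ₁ 1 1 ^ 2 - 1 := by
    refine Int.dvd_sq_sub_one_of_dvd_24 hh24 (a := γ₁ 0 0) ?_
    rw [eq_add_of_sub_eq' γ₁.det_fin_two_eq_one]
    simpa using (hhN'.trans (dvd_of_mem_Gamma0 hγ₁)).mul_left (γ₁ 0 1)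
  simpa [mul_apply, Fin.sum_univ_two] using mul_dvd_lowerRow_mul_sub hhN'
    (dvd_of_mem_Gamma0 hγ₁) (dvd_of_mem_Gamma0 hγ₂) hd₁ γ₂.det_fin_two_eq_one

theorem Complex.exp_neg_two_pi_I_mul_div_eq_one {M x : ℤ} (v : ℤ) (hx : M ∣ x) :
    exp (-(2 * π * I * v * x) / M) = 1 := by
  obtain ⟨k, rfl⟩ := hx
  rcases eq_or_ne M 0 with rfl | hM
  · simp
  rw [← exp_int_mul_two_pi_mul_I (-(v * k))]
  congr 1
  field_simp
  push_cast
  ring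

theorem Complex.exp_neg_two_pi_I_mul_div_eq_mul {M x y z : ℤ} (v : ℤ) (hxyz : M ∣ x - (y + z)) :
    exp (-(2 * π * I * v * x) / M) =
      exp (-(2 * π * I * v * y) / M) * exp (-(2 * π * I * v * z) / M) := by
  rw [← exp_add, ← mul_one (exp (_ + _)), ← exp_neg_two_pi_I_mul_div_eq_one v hxyz, ← exp_add]
  congr 1
  push_cast
  ring

noncomputable def CongruenceSubgroup.chiGamma0 {N h : ℕ} (v : ℤ) (hh24 : h ∣ 24) (hhN : h ∣ N) :
    Gamma0 N →* ℂˣ where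
  toFun γ := Units.mk0 (exp (-(2 * π * I * v * ((γ : SL(2, ℤ)) 1 0 * (γ : SL(2, ℤ)) 1 1 : ℤ)) /
    (N * h : ℤ))) (exp_ne_zero _)
  map_one' := by ext; simp
  map_mul' γ₁ γ₂ := Units.ext <| exp_neg_two_pi_I_mul_div_eq_mul v <|
    mul_dvd_lowerRow_prod_mul_sub hh24 hhN γ₁.prop γ₂.prop

theorem chi_hom_Gamma0_general (N h : ℕ) (v : ℤ) (hh24 : h ∣ 24) (hhN : h ∣ N) :
    ∃ χ : CongruenceSubgroup.Gamma0 N →* ℂˣ,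
      (∀ γ : CongruenceSubgroup.Gamma0 N,
        (χ γ : ℂ) = Complex.exp (-(2 * (Real.pi : ℂ) * Complex.I * (v : ℂ) *
          ((γ : Matrix.SpecialLinearGroup (Fin 2) ℤ).val 1 0 : ℂ) *
          ((γ : Matrix.SpecialLinearGroup (Fin 2) ℤ).val 1 1 : ℂ)) / ((N : ℂ) * (h : ℂ)))) ∧
      ∀ γ : CongruenceSubgroup.Gamma0 N,
        (γ : Matrix.SpecialLinearGroup (Fin 2) ℤ) ∈ CongruenceSubgroup.Gamma0 (N * h) →
          χ γ = 1 := by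
  refine ⟨chiGamma0 v hh24 hhN, fun γ => ?_, fun γ hγ => ?_⟩
  · simp only [chiGamma0, MonoidHom.coe_mk, OneHom.coe_mk, Units.val_mk0]
    push_cast
    ring_nf
  · have hc : (N * h : ℤ) ∣ (γ : SL(2, ℤ)) 1 0 := by exact_mod_cast dvd_of_mem_Gamma0 hγ
    exact Units.ext (exp_neg_two_pi_I_mul_div_eq_one v (hc.mul_right _))

/-- For `h ∣ 24` and `h ∣ N`, the map `[[a,b],[c,d]] ↦ e^{-2πi v c d/(Nh)}` is a
group homomorphism `Γ₀(N) → ℂˣ` whose kernel contains `Γ₀(Nh)`. -/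
theorem chi_hom_Gamma0 (N h : ℕ) (v : ℤ) (hN : 0 < N) (hh24 : h ∣ 24) (hhN : h ∣ N) :
    ∃ χ : CongruenceSubgroup.Gamma0 N →* ℂˣ,
      (∀ γ : CongruenceSubgroup.Gamma0 N,
        (χ γ : ℂ) = Complex.exp (-(2 * (Real.pi : ℂ) * Complex.I * (v : ℂ) *
          ((γ : Matrix.SpecialLinearGroup (Fin 2) ℤ).val 1 0 : ℂ) *
          ((γ : Matrix.SpecialLinearGroup (Fin 2) ℤ).val 1 1 : ℂ)) / ((N : ℂ) * (h : ℂ)))) ∧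
      ∀ γ : CongruenceSubgroup.Gamma0 N,
        (γ : Matrix.SpecialLinearGroup (Fin 2) ℤ) ∈ CongruenceSubgroup.Gamma0 (N * h) →
          χ γ = 1 :=
  chi_hom_Gamma0_general N h v hh24 hhN
end

section
/- Let $D_0$ be a negative fundamental discriminant and $D$ a positive discriminant, and let $Q(x,y) = Ax^2 + Bxy + Cy^2$ be an integral binary quadratic form of discriminant $D_0 D$. If $D_0 = D_0' D_0''$ and $D_0 = E_0' E_0''$ are two factorizations of $D_0$ into discriminants with $\gcd(D_0', A) = \gcd(D_0'', C) = 1$ and $\gcd(E_0', A) = \gcd(E_0'', C) = 1$, then $\left(\frac{D_0'}{A}\right)\left(\frac{D_0''}{C}\right) = \left(\frac{E_0'}{A}\right)\left(\frac{E_0''}{C}\right)$; hence the genus character $\chi_{D_0}(Q)$ is well defined. -/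
/-- The Kronecker symbol `(a/n)`, extending the Jacobi symbol by
`(a/2) = 0, 1, -1` according as `a` is even, `a ≡ ±1 mod 8`, or `a ≡ ±3 mod 8`,
with sign factor for negative `n` and `(a , 0) = 1` iff `a = ±1`. -/
noncomputable def kronecker (a n : ℤ) : ℤ :=
  if n = 0 then (if a = 1 ∨ a = -1 then 1 else 0)
  else
    (if n < 0 ∧ a < 0 then -1 else 1) *
      (if a % 2 = 0 then 0 else if a % 8 = 1 ∨ a % 8 = 7 then 1 else -1) ^
        n.natAbs.factorization 2 *
      jacobiSym a (n.natAbs / 2 ^ n.natAbs.factorization 2)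

/-!
Write `D₀' = g x`, `E₀' = g y`, `D₀'' = y z`, `E₀'' = x z`, which is possible since
`D₀'D₀'' = E₀'E₀''`. The symbols involved are `±1`, so after cancelling `(g/A)` and `(z/C)` the
claim becomes `(xy/A)(xy/C) = (xy/AC) = 1`. Since `16 ∤ D₀`, both `δ = xy` and `gz` are
discriminants, and `B² - 4AC = δ · (gzD)`: the number `AC` is a value of the principal form of
discriminant `δ · (gzD)`, on which the genus character `(δ/·)` is trivial. By quadratic
reciprocity, `(δ/n) = 1` whenever `n > 0` is prime to `δ` and `B² - 4n = δD₁` for some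
discriminant `D₁`. Peeling off factors `4` of `δ` reduces this to `δ ≡ 1 (mod 4)`, where `4n` is a
square modulo `δ`, and to `δ = 4δ₁` with `δ₁ ≡ 2, 3 (mod 4)`, where the sign coming from
reciprocity is matched by `n mod 8`.
-/

open ZMod
open scoped NumberTheorySymbols

def IsDiscriminant (d : ℤ) : Prop := d % 4 = 0 ∨ d % 4 = 1

namespace IsDiscriminant

theorem mul {d e : ℤ} (hd : IsDiscriminant d) (he : IsDiscriminant e) :
    IsDiscriminant (d * e) := by
  unfold IsDiscriminant at *
  rw [Int.mul_emod]
  rcases hd with hd | hd <;> rcases he with he | he <;> simp [hd, he]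

theorem of_sq_mul {k d : ℤ} (hk : Odd k) (h : IsDiscriminant (k ^ 2 * d)) :
    IsDiscriminant d := by
  unfold IsDiscriminant at *
  rwa [Int.mul_emod, Int.sq_mod_four_eq_one_of_odd hk, one_mul, Int.emod_emod] at h

theorem four_dvd_of_two_dvd {d : ℤ} (hd : IsDiscriminant d) (h2 : 2 ∣ d) : 4 ∣ d := by
  unfold IsDiscriminant at hd
  omega

end IsDiscriminant

theorem exists_eq_mul_of_mul_eq_mul {α : Type*} [CommMonoidWithZero α] [IsCancelMulZero α]
    [DecompositionMonoid α] {a b c d : α} (hc : c ≠ 0) (h : a * b = c * d) :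
    ∃ g x y z, a = g * x ∧ b = y * z ∧ c = g * y ∧ d = x * z := by
  obtain ⟨g, y, ⟨x, rfl⟩, ⟨z, rfl⟩, rfl⟩ := exists_dvd_and_dvd_of_dvd_mul ⟨d, h⟩
  refine ⟨g, x, y, z, rfl, rfl, rfl, mul_left_cancel₀ hc ?_⟩
  rw [← h, mul_mul_mul_comm]

theorem isDiscriminant_mul_of_factorizations {g x y z : ℤ} (hgx : IsDiscriminant (g * x))
    (hyz : IsDiscriminant (y * z)) (hgy : IsDiscriminant (g * y)) (hxz : IsDiscriminant (x * z))
    (h16 : ¬ 16 ∣ g * x * (y * z)) : IsDiscriminant (x * y) := by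
  rcases Int.even_or_odd g with hg | hg
  · rcases Int.even_or_odd z with hz | hz
    · have h4gx := hgx.four_dvd_of_two_dvd (hg.two_dvd.mul_right x)
      have h4yz := hyz.four_dvd_of_two_dvd (hz.two_dvd.mul_left y)
      exact absurd (by simpa using mul_dvd_mul h4gx h4yz) h16
    · exact IsDiscriminant.of_sq_mul hz (by convert hyz.mul hxz using 1; ring)
  · exact IsDiscriminant.of_sq_mul hg (by convert hgx.mul hgy using 1; ring)

theorem Int.sq_mod_eight_eq_one_of_odd {x : ℤ} (hx : Odd x) : x ^ 2 % 8 = 1 := by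
  obtain ⟨k, rfl⟩ := hx
  obtain ⟨m, hm⟩ := Int.even_mul_succ_self k
  have : (2 * k + 1) ^ 2 = 4 * (k * (k + 1)) + 1 := by ring
  omega

theorem jacobiSym_eq_one_of_dvd_sq_sub {d m x : ℤ} (h : d ∣ x ^ 2 - m) (hcop : IsCoprime d m) :
    J(m | d.natAbs) = 1 := by
  have hx : IsCoprime x d := by
    obtain ⟨k, hk⟩ := h
    have : IsCoprime d (x ^ 2) := by
      rw [show x ^ 2 = m + d * k by linear_combination hk]
      exact hcop.add_mul_left_right k
    exact ((IsCoprime.pow_right_iff two_pos).mp this).symm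
  rw [jacobiSym.mod_left' (Int.modEq_iff_dvd.mpr (Int.natAbs_dvd.mpr h)), jacobiSym.sq_one']
  simpa [Int.gcd, Int.natAbs_abs] using Int.isCoprime_iff_gcd_eq_one.mp hx

theorem jacobiSym_quadratic_reciprocity_int {u : ℤ} {n : ℕ} (hu : Odd u) (hn : Odd n) :
    J(u | n) = (if u % 4 = 3 ∧ n % 4 = 3 then -1 else 1) * J(n | u.natAbs) := by
  have hu2 := Int.odd_iff.mp hu
  have hn2 := Nat.odd_iff.mp hn
  obtain ⟨w, rfl | rfl⟩ := Int.eq_nat_or_neg u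
  · rw [← jacobiSym.quadratic_reciprocity_if (by omega) hn2, Int.natAbs_natCast]
    split_ifs <;> omega
  · rw [jacobiSym.neg _ hn, ← jacobiSym.quadratic_reciprocity_if (by omega) hn2,
      χ₄_nat_eq_if_mod_four, Int.natAbs_neg, Int.natAbs_natCast]
    split_ifs <;> omega

theorem kronecker_of_ne_zero (a : ℤ) {n : ℤ} (hn : n ≠ 0) :
    kronecker a n = (if n < 0 ∧ a < 0 then -1 else 1) * χ₈ a ^ n.natAbs.factorization 2 *
      J(a | n.natAbs / 2 ^ n.natAbs.factorization 2) := by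
  rw [kronecker, if_neg hn, χ₈_int_eq_if_mod_eight]

theorem ite_mul_lt_zero_and (p : Prop) [Decidable p] {x y : ℤ} (hx : x ≠ 0) (hy : y ≠ 0) :
    (if x * y < 0 ∧ p then (-1 : ℤ) else 1) =
      (if x < 0 ∧ p then -1 else 1) * (if y < 0 ∧ p then -1 else 1) := by
  by_cases hp : p
  · rcases hx.lt_or_gt with hx | hx <;> rcases hy.lt_or_gt with hy | hy <;>
      simp [hp, hx, hy, hx.not_gt, hy.not_gt, mul_neg_iff]
  · simp [hp]

theorem kronecker_mul_left {a b n : ℤ} (ha : a ≠ 0) (hb : b ≠ 0) (hn : n ≠ 0) :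
    kronecker (a * b) n = kronecker a n * kronecker b n := by
  simp only [kronecker_of_ne_zero _ hn, and_comm (a := n < 0), ite_mul_lt_zero_and _ ha hb,
    Int.cast_mul, map_mul, mul_pow, jacobiSym.mul_left]
  ring

theorem kronecker_mul_right (a : ℤ) {m n : ℤ} (hm : m ≠ 0) (hn : n ≠ 0) :
    kronecker a (m * n) = kronecker a m * kronecker a n := by
  have hm' : m.natAbs ≠ 0 := Int.natAbs_ne_zero.mpr hm
  have hn' : n.natAbs ≠ 0 := Int.natAbs_ne_zero.mpr hn
  rw [kronecker_of_ne_zero _ (mul_ne_zero hm hn), kronecker_of_ne_zero _ hm,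
    kronecker_of_ne_zero _ hn, ite_mul_lt_zero_and _ hm hn, Int.natAbs_mul, Nat.ordCompl_mul,
    jacobiSym.mul_right' a (Nat.ordCompl_pos 2 hm').ne' (Nat.ordCompl_pos 2 hn').ne',
    Nat.factorization_mul hm' hn', Finsupp.add_apply, pow_add]
  ring

theorem kronecker_natCast_of_odd (a : ℤ) {n : ℕ} (hn : Odd n) : kronecker a n = J(a | n) := by
  rw [kronecker_of_ne_zero a (by exact_mod_cast hn.pos.ne'), Int.natAbs_natCast,
    Nat.factorization_eq_zero_of_not_dvd hn.not_two_dvd_nat]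
  simp

theorem kronecker_sq_eq_one {a n : ℤ} (h : Int.gcd a n = 1) : kronecker a n ^ 2 = 1 := by
  rcases eq_or_ne n 0 with rfl | hn
  · have : a = 1 ∨ a = -1 := by simp [Int.gcd] at h; omega
    simp [kronecker, this]
  rw [kronecker_of_ne_zero a hn, mul_pow, mul_pow, ← pow_mul,
    jacobiSym.sq_one (Nat.Coprime.coprime_dvd_right (Nat.ordCompl_dvd _ _) h), mul_one]
  have hsign : (if n < 0 ∧ a < 0 then (-1 : ℤ) else 1) ^ 2 = 1 := by split_ifs <;> norm_num
  rw [hsign, one_mul]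
  rcases Int.even_or_odd a with ha | ha
  · have hn2 : ¬ 2 ∣ n.natAbs := fun h2 => by
      have := Nat.dvd_gcd (Int.natAbs_dvd_natAbs.mpr ha.two_dvd) h2
      rw [← Int.gcd, h] at this
      norm_num at this
    rw [Nat.factorization_eq_zero_of_not_dvd hn2, zero_mul, pow_zero]
  · have := Int.odd_iff.mp ha
    rw [pow_mul', χ₈_int_eq_if_mod_eight]
    split_ifs <;> first | omega | norm_num

theorem kronecker_eq_jacobiSym_of_one_mod_four {d : ℤ} (hd : d % 4 = 1) {n : ℤ} (hn : 0 < n) :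
    kronecker d n = J(n | d.natAbs) := by
  have hdo : Odd d := Int.odd_iff.mpr (by omega)
  lift n to ℕ using hn.le
  have hn0 : n ≠ 0 := by exact_mod_cast hn.ne'
  have hm : Odd (n / 2 ^ n.factorization 2) :=
    Nat.odd_iff.mpr (by have := Nat.not_dvd_ordCompl Nat.prime_two hn0; omega)
  have hχ : χ₈ d = J(2 | d.natAbs) := by
    rw [jacobiSym.at_two (Int.natAbs_odd.mpr hdo), χ₈_int_eq_if_mod_eight,
      χ₈_nat_eq_if_mod_eight]
    split_ifs <;> omega
  rw [kronecker_of_ne_zero d (by exact_mod_cast hn0), if_neg (by omega), Int.natAbs_natCast,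
    jacobiSym_quadratic_reciprocity_int hdo hm, if_neg (by omega), hχ]
  conv_rhs => rw [← Nat.ordProj_mul_ordCompl_eq_self n 2]
  push_cast
  rw [jacobiSym.mul_left, jacobiSym.pow_left]
  ring

theorem jacobiSym_eq_one_of_two_mod_four {δ D x : ℤ} {n : ℕ} (hδ : δ % 4 = 2)
    (hD : IsDiscriminant D) (hn : Odd n) (hcop : IsCoprime δ n) (h : x ^ 2 - n = δ * D) :
    J(δ | n) = 1 := by
  obtain ⟨u, rfl⟩ : ∃ u, δ = 2 * u := ⟨δ / 2, by omega⟩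
  have hu : u % 2 = 1 := by omega
  have h' : x ^ 2 - n = 2 * (u * D) := by linear_combination h
  have hn2 := Nat.odd_iff.mp hn
  have hx8 : x ^ 2 % 8 = 1 := by
    rcases Int.even_or_odd x with hx | hx
    · have : 4 ∣ x ^ 2 := by simpa using pow_dvd_pow_of_dvd hx.two_dvd 2
      omega
    · exact Int.sq_mod_eight_eq_one_of_odd hx
  have huD : u * D % 4 = 0 ∨ u * D % 4 = u % 4 := by
    rw [Int.mul_emod]; rcases hD with hD | hD <;> simp [hD]
  rw [jacobiSym.mul_left, jacobiSym.at_two hn, χ₈_nat_eq_if_mod_eight,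
    jacobiSym_quadratic_reciprocity_int (Int.odd_iff.mpr hu) hn,
    jacobiSym_eq_one_of_dvd_sq_sub (d := u) (x := x) ⟨2 * D, by linear_combination h⟩
      hcop.of_mul_left_right]
  split_ifs <;> omega

theorem jacobiSym_eq_one_of_three_mod_four {δ D x : ℤ} {n : ℕ} (hδ : δ % 4 = 3)
    (hD : IsDiscriminant D) (hn : Odd n) (hcop : IsCoprime δ n) (h : x ^ 2 - n = δ * D) :
    J(δ | n) = 1 := by
  have hn4 : n % 4 = 1 := by
    have hδD : δ * D % 4 = 0 ∨ δ * D % 4 = 3 := by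
      rw [Int.mul_emod, hδ]; rcases hD with hD | hD <;> simp [hD]
    have := Nat.odd_iff.mp hn
    rcases Int.even_or_odd x with hx | hx
    · have : 4 ∣ x ^ 2 := by simpa using pow_dvd_pow_of_dvd hx.two_dvd 2
      omega
    · have := Int.sq_mod_four_eq_one_of_odd hx
      omega
  rw [jacobiSym_quadratic_reciprocity_int (Int.odd_iff.mpr (by omega)) hn,
    jacobiSym_eq_one_of_dvd_sq_sub ⟨D, h⟩ hcop, if_neg (by omega), one_mul]

theorem kronecker_eq_one_of_sq_sub_four_mul_eq {δ D B n : ℤ} (hδ : IsDiscriminant δ)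
    (hD : IsDiscriminant D) (hn : 0 < n) (hcop : IsCoprime δ n) (h : B ^ 2 - 4 * n = δ * D) :
    kronecker δ n = 1 := by
  induction hk : δ.natAbs using Nat.strong_induction_on generalizing δ D B with
  | _ k ih =>
  rcases hδ with hδ | hδ
  · obtain ⟨δ₁, rfl⟩ : ∃ δ₁, δ = 4 * δ₁ := ⟨δ / 4, by omega⟩
    lift n to ℕ using hn.le
    have hcop₁ : IsCoprime δ₁ n := hcop.of_mul_left_right
    have hn2 : Odd n := Int.odd_coe_nat n |>.mp <| Int.isCoprime_two_left.mp <|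
      (show (4 : ℤ) * δ₁ = 2 * (2 * δ₁) by ring) ▸ hcop |>.of_mul_left_left
    obtain ⟨x, rfl⟩ : ∃ x, B = 2 * x := by
      have : Even (B ^ 2) := ⟨2 * n + 2 * δ₁ * D, by linear_combination h⟩
      exact (Int.even_pow.mp this).1.two_dvd
    have hx : x ^ 2 - n = δ₁ * D := mul_left_cancel₀ four_ne_zero (by linear_combination h)
    rw [kronecker_natCast_of_odd _ hn2, jacobiSym.mul_left, jacobiSym.at_four hn2, one_mul]
    rcases (by unfold IsDiscriminant; omega :
      IsDiscriminant δ₁ ∨ δ₁ % 4 = 2 ∨ δ₁ % 4 = 3) with h₁ | h₁ | h₁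
    · rcases eq_or_ne δ₁ 0 with rfl | hδ₁
      · obtain rfl : n = 1 := by
          have := Int.isUnit_iff.mp (isCoprime_zero_left.mp hcop₁); omega
        exact jacobiSym.one_right 0
      rw [← kronecker_natCast_of_odd _ hn2]
      exact ih δ₁.natAbs (by omega) (D := 4 * D) (B := 2 * x) h₁
        (IsDiscriminant.mul (Or.inl rfl) hD) hcop₁ (by linear_combination h) rfl
    · exact jacobiSym_eq_one_of_two_mod_four h₁ hD hn2 hcop₁ hx
    · exact jacobiSym_eq_one_of_three_mod_four h₁ hD hn2 hcop₁ hx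
  · have hδo : Odd δ := Int.odd_iff.mpr (by omega)
    have hδ4 : IsCoprime δ 4 := by
      simpa using (Int.isCoprime_two_right.mpr hδo).pow_right (n := 2)
    have h4n : J(4 * n | δ.natAbs) = 1 :=
      jacobiSym_eq_one_of_dvd_sq_sub ⟨D, h⟩ (hδ4.mul_right hcop)
    rwa [jacobiSym.mul_left, jacobiSym.at_four (Int.natAbs_odd.mpr hδo), one_mul,
      ← kronecker_eq_jacobiSym_of_one_mod_four hδ hn] at h4n

theorem kronecker_mul_swap_of_kronecker_mul_eq_one {x y A C : ℤ} (hx : x ≠ 0) (hy : y ≠ 0)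
    (hA : A ≠ 0) (hC : C ≠ 0) (hyA : IsCoprime y A) (hxC : IsCoprime x C)
    (h : kronecker (x * y) (A * C) = 1) :
    kronecker x A * kronecker y C = kronecker y A * kronecker x C := by
  have hyA2 := kronecker_sq_eq_one (Int.isCoprime_iff_gcd_eq_one.mp hyA)
  have hxC2 := kronecker_sq_eq_one (Int.isCoprime_iff_gcd_eq_one.mp hxC)
  rw [kronecker_mul_right _ hA hC, kronecker_mul_left hx hy hA, kronecker_mul_left hx hy hC] at h
  linear_combination kronecker y A * kronecker x C * h - kronecker x A * kronecker y C * hyA2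
    - kronecker x A * kronecker y C * kronecker y A ^ 2 * hxC2

theorem genus_character_well_defined_general (D0 D A B C D0' D0'' E0' E0'' : ℤ)
    (hD0neg : D0 < 0)
    (hfund : (Odd D0 ∧ Squarefree D0) ∨
      ∃ e : ℤ, D0 = 4 * e ∧ Squarefree e ∧ (e % 4 = 2 ∨ e % 4 = 3))
    (hDpos : 0 < D) (hDdisc : D % 4 = 0 ∨ D % 4 = 1)
    (hQ : B ^ 2 - 4 * A * C = D0 * D)
    (h1 : D0 = D0' * D0'')
    (h1' : D0' % 4 = 0 ∨ D0' % 4 = 1) (h1'' : D0'' % 4 = 0 ∨ D0'' % 4 = 1)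
    (h1A : Int.gcd D0' A = 1) (h1C : Int.gcd D0'' C = 1)
    (h2 : D0 = E0' * E0'')
    (h2' : E0' % 4 = 0 ∨ E0' % 4 = 1) (h2'' : E0'' % 4 = 0 ∨ E0'' % 4 = 1)
    (h2A : Int.gcd E0' A = 1) (h2C : Int.gcd E0'' C = 1) :
    kronecker D0' A * kronecker D0'' C = kronecker E0' A * kronecker E0'' C := by
  have hAC : 0 < A * C := by nlinarith [sq_nonneg B, mul_neg_of_neg_of_pos hD0neg hDpos]
  have h16 : ¬ 16 ∣ D0 := by
    rcases hfund with ⟨hodd, -⟩ | ⟨e, rfl, -, he⟩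
    · have := Int.odd_iff.mp hodd; omega
    · omega
  obtain ⟨g, x, y, z, rfl, rfl, rfl, rfl⟩ :=
    exists_eq_mul_of_mul_eq_mul (by rintro rfl; simp_all) (h1.symm.trans h2)
  obtain ⟨⟨hg, hx⟩, hy, hz⟩ : (g ≠ 0 ∧ x ≠ 0) ∧ y ≠ 0 ∧ z ≠ 0 := by
    simpa only [mul_ne_zero_iff] using (h1 ▸ hD0neg.ne : g * x * (y * z) ≠ 0)
  have hA : A ≠ 0 := left_ne_zero_of_mul hAC.ne'
  have hC : C ≠ 0 := right_ne_zero_of_mul hAC.ne'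
  have h16' : ¬ 16 ∣ g * x * (y * z) := h1 ▸ h16
  have hxy : IsDiscriminant (x * y) := isDiscriminant_mul_of_factorizations h1' h1'' h2' h2'' h16'
  have hgz : IsDiscriminant (g * z) :=
    isDiscriminant_mul_of_factorizations (g := x) (x := g) (y := z) (z := y)
      (by rwa [mul_comm]) (by rwa [mul_comm]) h2'' h2' (by convert h16' using 2; ring)
  have hxA := (Int.isCoprime_iff_gcd_eq_one.mpr h1A).of_mul_left_right
  have hyA := (Int.isCoprime_iff_gcd_eq_one.mpr h2A).of_mul_left_right
  have hxC := (Int.isCoprime_iff_gcd_eq_one.mpr h2C).of_mul_left_left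
  have hyC := (Int.isCoprime_iff_gcd_eq_one.mpr h1C).of_mul_left_left
  have key : kronecker (x * y) (A * C) = 1 :=
    kronecker_eq_one_of_sq_sub_four_mul_eq (B := B) hxy (hgz.mul hDdisc) hAC
      ((hxA.mul_left hyA).mul_right (hxC.mul_left hyC)) (by linear_combination hQ + D * h1)
  rw [kronecker_mul_left hg hx hA, kronecker_mul_left hy hz hC, kronecker_mul_left hg hy hA,
    kronecker_mul_left hx hz hC]
  linear_combination kronecker g A * kronecker z C *
    kronecker_mul_swap_of_kronecker_mul_eq_one hx hy hA hC hyA hxC key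

/-- Well-definedness of the genus character: for `Q = [A,B,C]` of discriminant `D₀D`
with `D₀ < 0` a fundamental discriminant and `D > 0` a discriminant, the value
`(D₀'/A)(D₀''/C)` is independent of the factorization `D₀ = D₀'D₀''` into
discriminants with `gcd(D₀',A) = gcd(D₀'',C) = 1`. -/
theorem genus_character_well_defined (D0 D A B C D0' D0'' E0' E0'' : ℤ)
    (hD0neg : D0 < 0)
    (hD0disc : D0 % 4 = 0 ∨ D0 % 4 = 1)
    (hfund : (Odd D0 ∧ Squarefree D0) ∨
      ∃ e : ℤ, D0 = 4 * e ∧ Squarefree e ∧ (e % 4 = 2 ∨ e % 4 = 3))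
    (hDpos : 0 < D) (hDdisc : D % 4 = 0 ∨ D % 4 = 1)
    (hQ : B ^ 2 - 4 * A * C = D0 * D)
    (h1 : D0 = D0' * D0'')
    (h1' : D0' % 4 = 0 ∨ D0' % 4 = 1) (h1'' : D0'' % 4 = 0 ∨ D0'' % 4 = 1)
    (h1A : Int.gcd D0' A = 1) (h1C : Int.gcd D0'' C = 1)
    (h2 : D0 = E0' * E0'')
    (h2' : E0' % 4 = 0 ∨ E0' % 4 = 1) (h2'' : E0'' % 4 = 0 ∨ E0'' % 4 = 1)
    (h2A : Int.gcd E0' A = 1) (h2C : Int.gcd E0'' C = 1) :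
    kronecker D0' A * kronecker D0'' C = kronecker E0' A * kronecker E0'' C :=
  genus_character_well_defined_general D0 D A B C D0' D0'' E0' E0'' hD0neg hfund hDpos hDdisc hQ h1
    h1' h1'' h1A h1C h2 h2' h2'' h2A h2C
end
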